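/- arXiv:1609.01642 — 2 statements merged into one kernel-verified Lean document; each statement's English description precedes it below -/
import Mathlib

section
/- The two-dimensional Marcinkiewicz kernel satisfies the identity M_A K_{M_A}(x,y) = (∑_{r=0}^{m_{A-1}-1} ψ_{M_{A-1}}(x+y)^r) · M_{A-1} K_{M_{A-1}}(x,y) + M_{A-1} ∑_{r=1}^{m_{A-1}-1} (∑_{q=0}^{r-1} ψ_{M_{A-1}}(x)^q)(∑_{s=0}^{r-1} ψ_{M_{A-1}}(y)^s) D_{M_{A-1}}(x) D_{M_{A-1}}(y) + ∑_{r=1}^{m_{A-1}-1} (∑_{q=0}^{r-1} ψ_{M_{A-1}}(x)^q) ψ_{M_{A-1}}(y)^r D_{M_{A-1}}(x) · M_{A-1} K_{M_{A-1}}(y) + ∑_{r=1}^{m_{A-1}-1} (∑_{s=0}^{r-1} ψ_{M_{A-1}}(y)^s) ψ_{M_{A-1}}(x)^r D_{M_{A-1}}(y) · M_{A-1} K_{M_{A-1}}(x), where K_n(x,y) := (1/n) ∑_{k=0}^{n-1} D_k(x) D_k(y) and K_n(x) := (1/n) ∑_{k=0}^{n-1} D_k(x). -/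
open Complex Finset

noncomputable section

/-- The generalized number system: `M 0 = 1`, `M (k+1) = m k * M k`. -/
def Mf (m : ℕ → ℕ) : ℕ → ℕ
  | 0 => 1
  | k + 1 => m k * Mf m k

/-- The generalized Rademacher function `r_k(x) = exp(2πi x_k / m_k)`. -/
def rad (m : ℕ → ℕ) (k : ℕ) (x : ∀ j, ZMod (m j)) : ℂ :=
  Complex.exp (2 * Real.pi * Complex.I * (x k).val / (m k))

/-- The Vilenkin function `ψ_n(x) = ∏ k, r_k(x)^{n_k}` where `n_k = (n / M_k) % m_k`
is the k-th digit of `n` in the generalized number system. -/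
def psi (m : ℕ → ℕ) (n : ℕ) (x : ∀ j, ZMod (m j)) : ℂ :=
  ∏ k ∈ Finset.range (n + 1), rad m k x ^ ((n / Mf m k) % m k)

/-- Vilenkin Dirichlet kernel. -/
def Dker (m : ℕ → ℕ) (n : ℕ) (x : ∀ j, ZMod (m j)) : ℂ :=
  ∑ j ∈ Finset.range n, psi m j x

/-- One-dimensional Vilenkin Fejér kernel. -/
def Fejer (m : ℕ → ℕ) (n : ℕ) (x : ∀ j, ZMod (m j)) : ℂ :=
  (n : ℂ)⁻¹ * ∑ k ∈ Finset.range n, Dker m k x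

/-- Two-dimensional Marcinkiewicz–Fejér kernel. -/
def MKer (m : ℕ → ℕ) (n : ℕ) (x y : ∀ j, ZMod (m j)) : ℂ :=
  (n : ℂ)⁻¹ * ∑ k ∈ Finset.range n, Dker m k x * Dker m k y

/-- `e_s ∈ G_m`: the element whose s-th coordinate is 1 and all others are 0. -/
def evec (m : ℕ → ℕ) (s : ℕ) : ∀ j, ZMod (m j) :=
  fun j => if j = s then 1 else 0

/-- `r_{i,n}(x,y) = ∏_{l=i}^{n} ∑_{s=0}^{m_l-1} ψ_{M_l}(x+y)^s`. -/
def rr (m : ℕ → ℕ) (i n : ℕ) (x y : ∀ j, ZMod (m j)) : ℂ :=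
  ∏ l ∈ Finset.Icc i n, ∑ s ∈ Finset.range (m l), psi m (Mf m l) (x + y) ^ s

/-!
Split `range (M_A)` into the `m_{A-1}` blocks `j + r M_{A-1}`, `j < M_{A-1}`. Adding `r M_{A-1}`
only changes the digit of index `A-1`, so `ψ_{j + r M_{A-1}} = ψ_j ψ_{M_{A-1}}^r`, whence
`D_{j + r M_{A-1}} = (∑_{q<r} ψ_{M_{A-1}}^q) D_{M_{A-1}} + ψ_{M_{A-1}}^r D_j`. Multiplying the
`x` and `y` versions and summing over `j` and `r` gives the four terms, with
`ψ_{M_{A-1}}(x + y) = ψ_{M_{A-1}}(x) ψ_{M_{A-1}}(y)` since `ψ_{M_k}` is the character `r_k`;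
the `r = 0` summands of the last three sums vanish.
-/

section Vilenkin

variable {m : ℕ → ℕ}

lemma self_lt_Mf (hm : ∀ k, 2 ≤ m k) (k : ℕ) : k < Mf m k := by
  induction k with
  | zero => exact Nat.one_pos
  | succ k ih =>
    show k + 1 < m k * Mf m k
    nlinarith [hm k]

lemma Mf_pos (hm : ∀ k, 2 ≤ m k) (k : ℕ) : 0 < Mf m k :=
  (Nat.zero_le k).trans_lt (self_lt_Mf hm k)

lemma Mf_dvd_Mf {a b : ℕ} (h : a ≤ b) : Mf m a ∣ Mf m b := by
  induction b, h using Nat.le_induction with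
  | base => exact dvd_rfl
  | succ b _ ih => exact ih.mul_left (m b)

lemma psi_eq_prod_range (hm : ∀ k, 2 ≤ m k) {n N : ℕ} (hN : n < N) (x : ∀ j, ZMod (m j)) :
    psi m n x = ∏ k ∈ range N, rad m k x ^ ((n / Mf m k) % m k) := by
  refine prod_subset (range_subset_range.mpr hN) fun k _ hk => ?_
  have hn : n < Mf m k :=
    (Nat.lt_succ_self n).trans ((not_lt.mp (mem_range.not.mp hk)).trans_lt (self_lt_Mf hm k))
  rw [Nat.div_eq_of_lt hn, Nat.zero_mod, pow_zero]

lemma digit_add_Mf_mul (hm : ∀ k, 2 ≤ m k) {B r j : ℕ} (hr : r < m B) (hj : j < Mf m B)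
    (k : ℕ) :
    (j + Mf m B * r) / Mf m k % m k = j / Mf m k % m k + if k = B then r else 0 := by
  have hMk := Mf_pos hm k
  rcases lt_trichotomy k B with hkB | rfl | hBk
  · obtain ⟨t, ht⟩ := Mf_dvd_Mf (m := m) (Nat.succ_le_of_lt hkB)
    have hsplit : j + Mf m B * r = j + Mf m k * (m k * (t * r)) := by
      rw [ht]; show j + m k * Mf m k * t * r = _; ring
    rw [hsplit, Nat.add_mul_div_left _ _ hMk, Nat.add_mul_mod_self_left, if_neg hkB.ne,
      add_zero]
  · rw [Nat.add_mul_div_left _ _ hMk, Nat.div_eq_of_lt hj, Nat.zero_mod, zero_add, zero_add,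
      Nat.mod_eq_of_lt hr, if_pos rfl]
  · have hle : Mf m (B + 1) ≤ Mf m k := Nat.le_of_dvd hMk (Mf_dvd_Mf hBk)
    have hlt : j + Mf m B * r < Mf m (B + 1) :=
      calc j + Mf m B * r < Mf m B * (r + 1) := by linarith
        _ ≤ Mf m B * m B := Nat.mul_le_mul_left _ hr
        _ = Mf m (B + 1) := mul_comm _ _
    rw [Nat.div_eq_of_lt (hlt.trans_le hle), Nat.div_eq_of_lt (by omega), if_neg hBk.ne',
      add_zero]

lemma psi_add_Mf_mul (hm : ∀ k, 2 ≤ m k) {B r j : ℕ} (hr : r < m B) (hj : j < Mf m B)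
    (x : ∀ j, ZMod (m j)) :
    psi m (j + Mf m B * r) x = psi m j x * rad m B x ^ r := by
  set N := B + (j + Mf m B * r) + 1
  rw [psi_eq_prod_range hm (show j + Mf m B * r < N by omega),
    psi_eq_prod_range hm (show j < N by omega)]
  simp_rw [digit_add_Mf_mul hm hr hj, pow_add, prod_mul_distrib, pow_ite, pow_zero,
    prod_ite_eq' (range N) B, if_pos (mem_range.mpr (show B < N by omega))]

lemma psi_Mf (hm : ∀ k, 2 ≤ m k) (B : ℕ) (x : ∀ j, ZMod (m j)) :
    psi m (Mf m B) x = rad m B x := by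
  simpa [psi] using psi_add_Mf_mul hm (r := 1) (hm B) (Mf_pos hm B) x

lemma rad_eq_stdAddChar (k : ℕ) [NeZero (m k)] (x : ∀ j, ZMod (m j)) :
    rad m k x = ZMod.stdAddChar (x k) := by
  rw [ZMod.stdAddChar_apply, ZMod.toCircle_apply]
  rfl

lemma rad_add (k : ℕ) [NeZero (m k)] (x y : ∀ j, ZMod (m j)) :
    rad m k (x + y) = rad m k x * rad m k y := by
  simp only [rad_eq_stdAddChar, Pi.add_apply, AddChar.map_add_eq_mul]

lemma psi_Mf_add (hm : ∀ k, 2 ≤ m k) (B : ℕ) (x y : ∀ j, ZMod (m j)) :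
    psi m (Mf m B) (x + y) = psi m (Mf m B) x * psi m (Mf m B) y := by
  have : NeZero (m B) := ⟨by linarith [hm B]⟩
  simp only [psi_Mf hm, rad_add]

lemma sum_range_mul_eq_sum_sum {β : Type*} [AddCommMonoid β] (f : ℕ → β) (a b : ℕ) :
    ∑ k ∈ range (b * a), f k = ∑ q ∈ range a, ∑ i ∈ range b, f (i + b * q) := by
  induction a with
  | zero => simp
  | succ a ih =>
    rw [Nat.mul_succ, sum_range_add, ih, sum_range_succ]
    simp_rw [add_comm (b * a)]

lemma Dker_add_Mf_mul (hm : ∀ k, 2 ≤ m k) {B r j : ℕ} (hr : r < m B) (hj : j ≤ Mf m B)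
    (x : ∀ j, ZMod (m j)) :
    Dker m (j + Mf m B * r) x =
      (∑ q ∈ range r, psi m (Mf m B) x ^ q) * Dker m (Mf m B) x
        + psi m (Mf m B) x ^ r * Dker m j x := by
  simp only [Dker]
  rw [add_comm j, sum_range_add, sum_range_mul_eq_sum_sum, sum_mul]
  congr 1
  · refine sum_congr rfl fun q hq => ?_
    rw [mul_sum]
    refine sum_congr rfl fun i hi => ?_
    rw [psi_add_Mf_mul hm ((mem_range.mp hq).trans hr) (mem_range.mp hi), psi_Mf hm, mul_comm]
  · rw [mul_sum]
    refine sum_congr rfl fun i hi => ?_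
    rw [add_comm, psi_add_Mf_mul hm hr ((mem_range.mp hi).trans_le hj), psi_Mf hm, mul_comm]

lemma sum_Dker_mul_Dker_add_Mf_mul (hm : ∀ k, 2 ≤ m k) {B r : ℕ} (hr : r < m B)
    (x y : ∀ j, ZMod (m j)) :
    ∑ j ∈ range (Mf m B), Dker m (j + Mf m B * r) x * Dker m (j + Mf m B * r) y =
      (psi m (Mf m B) x * psi m (Mf m B) y) ^ r *
          ∑ j ∈ range (Mf m B), Dker m j x * Dker m j y
        + Mf m B * ((∑ q ∈ range r, psi m (Mf m B) x ^ q)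
            * (∑ s ∈ range r, psi m (Mf m B) y ^ s) * Dker m (Mf m B) x * Dker m (Mf m B) y)
        + (∑ q ∈ range r, psi m (Mf m B) x ^ q) * psi m (Mf m B) y ^ r * Dker m (Mf m B) x
            * ∑ j ∈ range (Mf m B), Dker m j y
        + (∑ s ∈ range r, psi m (Mf m B) y ^ s) * psi m (Mf m B) x ^ r * Dker m (Mf m B) y
            * ∑ j ∈ range (Mf m B), Dker m j x := by
  set M := Mf m B
  set Gx := ∑ q ∈ range r, psi m M x ^ q
  set Gy := ∑ s ∈ range r, psi m M y ^ s
  have hexpand : ∀ j ∈ range M, Dker m (j + M * r) x * Dker m (j + M * r) y =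
      (psi m M x * psi m M y) ^ r * (Dker m j x * Dker m j y)
        + Gx * Gy * Dker m M x * Dker m M y
        + Gx * psi m M y ^ r * Dker m M x * Dker m j y
        + Gy * psi m M x ^ r * Dker m M y * Dker m j x := fun j hj => by
    have hjM := (mem_range.mp hj).le
    rw [Dker_add_Mf_mul hm hr hjM x, Dker_add_Mf_mul hm hr hjM y]
    ring
  rw [sum_congr rfl hexpand]
  simp only [sum_add_distrib, ← mul_sum, sum_const, card_range, nsmul_eq_mul]
  ring

lemma sum_Dker_mul_Dker_Mf_succ (hm : ∀ k, 2 ≤ m k) (B : ℕ) (x y : ∀ j, ZMod (m j)) :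
    ∑ k ∈ range (Mf m (B + 1)), Dker m k x * Dker m k y =
      (∑ r ∈ range (m B), (psi m (Mf m B) x * psi m (Mf m B) y) ^ r) *
          ∑ j ∈ range (Mf m B), Dker m j x * Dker m j y
        + Mf m B * ∑ r ∈ range (m B), (∑ q ∈ range r, psi m (Mf m B) x ^ q)
            * (∑ s ∈ range r, psi m (Mf m B) y ^ s) * Dker m (Mf m B) x * Dker m (Mf m B) y
        + ∑ r ∈ range (m B), (∑ q ∈ range r, psi m (Mf m B) x ^ q) * psi m (Mf m B) y ^ r
            * Dker m (Mf m B) x * ∑ j ∈ range (Mf m B), Dker m j y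
        + ∑ r ∈ range (m B), (∑ s ∈ range r, psi m (Mf m B) y ^ s) * psi m (Mf m B) x ^ r
            * Dker m (Mf m B) y * ∑ j ∈ range (Mf m B), Dker m j x := by
  rw [show Mf m (B + 1) = Mf m B * m B from mul_comm _ _, sum_range_mul_eq_sum_sum,
    sum_congr rfl fun r hr => sum_Dker_mul_Dker_add_Mf_mul hm (mem_range.mp hr) x y,
    sum_mul, mul_sum]
  simp only [sum_add_distrib]

lemma sum_Icc_one_sub_one_eq_sum_range {β : Type*} [AddCommMonoid β] {f : ℕ → β}
    (hf : f 0 = 0) (n : ℕ) : ∑ r ∈ Icc 1 (n - 1), f r = ∑ r ∈ range n, f r := by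
  rcases n with _ | n
  · rfl
  · rw [sum_range_eq_add_Ico f n.succ_pos, hf, zero_add, Nat.add_sub_cancel]
    rfl

end Vilenkin

theorem stmt4 (m : ℕ → ℕ) (hm : ∀ k, 2 ≤ m k) (A : ℕ) (hA : 1 ≤ A)
    (x y : ∀ j, ZMod (m j)) :
    (Mf m A : ℂ) * MKer m (Mf m A) x y =
      (∑ r ∈ Finset.range (m (A - 1)), psi m (Mf m (A - 1)) (x + y) ^ r) *
          ((Mf m (A - 1) : ℂ) * MKer m (Mf m (A - 1)) x y) +
        (Mf m (A - 1) : ℂ) * ∑ r ∈ Finset.Icc 1 (m (A - 1) - 1),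
          (∑ q ∈ Finset.range r, psi m (Mf m (A - 1)) x ^ q) *
            (∑ s ∈ Finset.range r, psi m (Mf m (A - 1)) y ^ s) *
            Dker m (Mf m (A - 1)) x * Dker m (Mf m (A - 1)) y +
        (∑ r ∈ Finset.Icc 1 (m (A - 1) - 1),
          (∑ q ∈ Finset.range r, psi m (Mf m (A - 1)) x ^ q) * psi m (Mf m (A - 1)) y ^ r *
            Dker m (Mf m (A - 1)) x * ((Mf m (A - 1) : ℂ) * Fejer m (Mf m (A - 1)) y)) +
        ∑ r ∈ Finset.Icc 1 (m (A - 1) - 1),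
          (∑ s ∈ Finset.range r, psi m (Mf m (A - 1)) y ^ s) * psi m (Mf m (A - 1)) x ^ r *
            Dker m (Mf m (A - 1)) y * ((Mf m (A - 1) : ℂ) * Fejer m (Mf m (A - 1)) x) := by
  obtain ⟨B, rfl⟩ : ∃ B, A = B + 1 := ⟨A - 1, (Nat.sub_add_cancel hA).symm⟩
  have hMf_ne_zero (k : ℕ) : (Mf m k : ℂ) ≠ 0 := Nat.cast_ne_zero.mpr (Mf_pos hm k).ne'
  simp only [Nat.add_sub_cancel, MKer, Fejer, mul_inv_cancel_left₀ (hMf_ne_zero _)]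
  rw [sum_Icc_one_sub_one_eq_sum_range (by simp), sum_Icc_one_sub_one_eq_sum_range (by simp),
    sum_Icc_one_sub_one_eq_sum_range (by simp), psi_Mf_add hm, sum_Dker_mul_Dker_Mf_succ hm]
end
end

section
/- For a bounded Vilenkin group there exists a constant c > 0 such that for every n with M_A ≤ n < M_{A+1} and all (x,y) ∈ G_m × G_m, n|K_n(x,y)| ≤ c [ ∑_{j=0}^{A} ∑_{q=0}^{j-1} ∑_{k=q}^{j-1} r_{k+1,j-1}(x,y) M_q D_{M_k}(x) ∑_{y_q=1}^{m_q-1} D_{M_k}(y − y_q e_q) + (the symmetric term with x and y interchanged) + ∑_{j=0}^{A} D_{M_j}(x) ∑_{s=0}^{j} M_s ∑_{i=s}^{j} ∑_{y_s=1}^{m_s-1} D_{M_i}(y − y_s e_s) + (the symmetric term with x and y interchanged) ]. -/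
open Complex Finset

noncomputable section

open NNReal

/-!
Expanding `D_k` along the digits of `k` gives `D_k = ∑_{j ≤ A} c_j(k) D_{M_j}` with
`c_j(k) = ψ_{k'}·∑_{p < k_j} r_j^p`, where `k'` is `k` with its digits below `j + 1` cleared.
Hence `n K_n(x, y) = ∑_{i, j ≤ A} D_{M_j}(x) D_{M_i}(y) ∑_{k < n} c_j(k)(x) c_i(k)(y)`.
Since `|D_{M_j}(x)| = ∏_{l < j} m_l [x_l = 0]`, only pairs with `x` vanishing below `j` and `y`
below `i` contribute, and for those the inner sum runs over `k < n` of a product of functions of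
the single digits `k_l`. Cutting `[0, n)` into complete digit blocks bounds it, up to a power of
`sup m_l`, by `∑_{t ≤ A} ∏_{l < t, l ≠ i, j} m_l [x_l + y_l = 0]`.

These weights are then redistributed. Below `j` the weight only sees `y` and vanishes unless
`y_l = 0` for every `l < t` other than the excluded index `q = i`; the shift `y - y_q e_q` clears
that last coordinate and turns the weight into `|D_{M_t}(y - y_q e_q)| / m_q`. Between `j` and `t`
the weight is `|r_{j+1, t-1}(x, y)|`.
-/

namespace Vilenkin

variable {m : ℕ → ℕ}

theorem Mf_succ (m : ℕ → ℕ) (k : ℕ) : Mf m (k + 1) = m k * Mf m k := rfl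

theorem Mf_eq_prod (m : ℕ → ℕ) : ∀ t, Mf m t = ∏ l ∈ range t, m l
  | 0 => rfl
  | t + 1 => by rw [prod_range_succ, ← Mf_eq_prod m t, Mf_succ, mul_comm]

theorem Mf_pos (hm : ∀ k, 0 < m k) (k : ℕ) : 0 < Mf m k := by
  rw [Mf_eq_prod]
  exact prod_pos fun l _ => hm l

theorem Mf_dvd_Mf {k l : ℕ} (h : k ≤ l) : Mf m k ∣ Mf m l := by
  rw [Mf_eq_prod, Mf_eq_prod]
  exact prod_dvd_prod_of_subset _ _ _ (range_subset_range.mpr h)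

theorem Mf_le_Mf (hm : ∀ k, 0 < m k) {k l : ℕ} (h : k ≤ l) : Mf m k ≤ Mf m l :=
  Nat.le_of_dvd (Mf_pos hm l) (Mf_dvd_Mf h)

theorem lt_Mf_self (hm : ∀ k, 2 ≤ m k) : ∀ n, n < Mf m n
  | 0 => Nat.one_pos
  | n + 1 => by
    have := lt_Mf_self hm n
    rw [Mf_succ]
    nlinarith [hm n]

theorem sum_range_Mf_le (hm : ∀ k, 2 ≤ m k) : ∀ t, ∑ i ∈ range t, Mf m i ≤ Mf m t
  | 0 => by simp
  | t + 1 => by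
    rw [sum_range_succ, Mf_succ]
    nlinarith [sum_range_Mf_le hm t, hm t]

def digit (m : ℕ → ℕ) (l k : ℕ) : ℕ := k / Mf m l % m l

def roundDown (m : ℕ → ℕ) (j k : ℕ) : ℕ := Mf m j * (k / Mf m j)

theorem digit_lt (hm : ∀ k, 0 < m k) (l k : ℕ) : digit m l k < m l :=
  Nat.mod_lt _ (hm l)

theorem digit_eq_zero_of_lt {l k : ℕ} (h : k < Mf m l) : digit m l k = 0 := by
  simp [digit, Nat.div_eq_of_lt h]

theorem digit_eq_zero_of_dvd (hm : ∀ k, 0 < m k) {l a : ℕ} (h : Mf m (l + 1) ∣ a) :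
    digit m l a = 0 := by
  obtain ⟨c, rfl⟩ := h
  rw [digit, Mf_succ, mul_comm (m l), mul_assoc, Nat.mul_div_cancel_left _ (Mf_pos hm l),
    Nat.mul_mod_right]

theorem digit_add (hm : ∀ k, 0 < m k) {j a b : ℕ} (ha : Mf m j ∣ a) (hb : b < Mf m j)
    (l : ℕ) : digit m l (a + b) = digit m l a + digit m l b := by
  obtain ⟨c, rfl⟩ := ha
  rcases Nat.lt_or_ge l j with hl | hl
  · obtain ⟨d, hd⟩ := Mf_dvd_Mf (m := m) (show l + 1 ≤ j by omega)
    have h : Mf m j * c + b = b + Mf m l * (m l * (d * c)) := by rw [hd, Mf_succ]; ring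
    rw [digit_eq_zero_of_dvd (a := Mf m j * c) hm ⟨d * c, by rw [hd, mul_assoc]⟩, zero_add,
      digit, digit, h, Nat.add_mul_div_left _ _ (Mf_pos hm l), Nat.add_mul_mod_self_left]
  · obtain ⟨d, hd⟩ := Mf_dvd_Mf (m := m) hl
    have h : (Mf m j * c + b) / Mf m l = Mf m j * c / Mf m l := by
      rw [hd, ← Nat.div_div_eq_div_mul, ← Nat.div_div_eq_div_mul,
        Nat.mul_div_cancel_left _ (Mf_pos hm j), add_comm, Nat.add_mul_div_left _ _ (Mf_pos hm j),
        Nat.div_eq_of_lt hb, zero_add]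
    rw [digit, digit, digit, h, Nat.div_eq_of_lt (hb.trans_le (Mf_le_Mf hm hl)), Nat.zero_mod,
      add_zero]

theorem digit_mul_Mf (hm : ∀ k, 0 < m k) {p j : ℕ} (hp : p < m j) (l : ℕ) :
    digit m l (p * Mf m j) = if l = j then p else 0 := by
  rcases lt_trichotomy l j with hl | rfl | hl
  · rw [if_neg hl.ne]
    exact digit_eq_zero_of_dvd hm ((Mf_dvd_Mf hl).trans (dvd_mul_left _ _))
  · rw [if_pos rfl, digit, Nat.mul_div_cancel _ (Mf_pos hm l), Nat.mod_eq_of_lt hp]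
  · rw [if_neg hl.ne']
    apply digit_eq_zero_of_lt
    calc p * Mf m j < m j * Mf m j := Nat.mul_lt_mul_of_pos_right hp (Mf_pos hm j)
      _ ≤ Mf m l := Mf_le_Mf hm hl

theorem roundDown_le (m : ℕ → ℕ) (j k : ℕ) : roundDown m j k ≤ k := by
  rw [roundDown, mul_comm]
  exact Nat.div_mul_le_self k (Mf m j)

theorem roundDown_eq_add (m : ℕ → ℕ) (j k : ℕ) :
    roundDown m j k = roundDown m (j + 1) k + digit m j k * Mf m j := by
  have h : k / Mf m (j + 1) = k / Mf m j / m j := by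
    rw [Mf_succ, mul_comm, Nat.div_div_eq_div_mul]
  rw [roundDown, roundDown, digit, h, Mf_succ]
  conv_lhs => rw [← Nat.div_add_mod (k / Mf m j) (m j)]
  ring

theorem digit_roundDown (hm : ∀ k, 0 < m k) (j k l : ℕ) :
    digit m l (roundDown m j k) = if l < j then 0 else digit m l k := by
  split_ifs with hl
  · exact digit_eq_zero_of_dvd hm ((Mf_dvd_Mf hl).trans (dvd_mul_right _ _))
  · obtain ⟨f, hf⟩ := Mf_dvd_Mf (m := m) (not_lt.mp hl)
    rw [digit, digit, roundDown, hf, Nat.mul_div_mul_left _ _ (Mf_pos hm j),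
      ← Nat.div_div_eq_div_mul]

theorem prod_digit_mul_Mf_add {R : Type*} [CommMonoid R] (hm : ∀ k, 0 < m k) {t p u : ℕ}
    (hp : p < m t) (hu : u < Mf m t) (g : ℕ → ℕ → R) :
    ∏ l ∈ range (t + 1), g l (digit m l (p * Mf m t + u)) =
      (∏ l ∈ range t, g l (digit m l u)) * g t p := by
  have hdigit := digit_add hm (dvd_mul_left (Mf m t) p) hu
  rw [prod_range_succ, hdigit, digit_mul_Mf hm hp, if_pos rfl, digit_eq_zero_of_lt hu, add_zero]
  congr 1
  refine prod_congr rfl fun l hl => ?_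
  rw [hdigit, digit_mul_Mf hm hp, if_neg (mem_range.mp hl).ne, zero_add]

theorem sum_prod_digit_mul_Mf_add {R : Type*} [CommSemiring R] (hm : ∀ k, 0 < m k)
    {t c r : ℕ} (hc : c < m t) (hr : r ≤ Mf m t) (g : ℕ → ℕ → R) :
    ∑ u ∈ range r, ∏ l ∈ range (t + 1), g l (digit m l (c * Mf m t + u)) =
      (∑ u ∈ range r, ∏ l ∈ range t, g l (digit m l u)) * g t c := by
  rw [sum_mul]
  exact sum_congr rfl fun u hu => prod_digit_mul_Mf_add hm hc ((mem_range.mp hu).trans_le hr) g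

theorem sum_prod_digit_range_mul_Mf {R : Type*} [CommSemiring R] (hm : ∀ k, 0 < m k)
    {t c : ℕ} (hc : c ≤ m t) (g : ℕ → ℕ → R) :
    ∑ k ∈ range (c * Mf m t), ∏ l ∈ range (t + 1), g l (digit m l k) =
      (∑ u ∈ range (Mf m t), ∏ l ∈ range t, g l (digit m l u)) * ∑ p ∈ range c, g t p := by
  induction c with
  | zero => simp
  | succ c ih =>
    rw [Nat.succ_mul, sum_range_add, ih (by omega),
      sum_prod_digit_mul_Mf_add hm (by omega) le_rfl, sum_range_succ, mul_add]

theorem sum_prod_digit {R : Type*} [CommSemiring R] (hm : ∀ k, 0 < m k) (g : ℕ → ℕ → R) :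
    ∀ t, ∑ k ∈ range (Mf m t), ∏ l ∈ range t, g l (digit m l k) =
      ∏ l ∈ range t, ∑ s ∈ range (m l), g l s
  | 0 => by simp [Mf]
  | t + 1 => by
    rw [Mf_succ, sum_prod_digit_range_mul_Mf hm le_rfl, sum_prod_digit hm g t, prod_range_succ]

theorem nnnorm_sum_prod_digit_le {𝕜 : Type*} [NormedField 𝕜] (hm : ∀ k, 0 < m k)
    (g : ℕ → ℕ → 𝕜) (β σ : ℕ → ℝ≥0) (hβ : ∀ l s, s < m l → ‖g l s‖₊ ≤ β l)
    (hσ : ∀ l, ‖∑ s ∈ range (m l), g l s‖₊ ≤ σ l) :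
    ∀ t n, n < Mf m t → ‖∑ k ∈ range n, ∏ l ∈ range t, g l (digit m l k)‖₊ ≤
      ∑ t' ∈ range t, m t' * β t' * (∏ l ∈ range t', σ l) * ∏ l ∈ Ico (t' + 1) t, β l
  | 0, n, hn => by simp [Nat.lt_one_iff.mp hn]
  | t + 1, n, hn => by
    -- With `n = c * M_t + r`, the `c` complete blocks factor as `∏ l < t, ∑ s, g l s` times
    -- `∑ p < c, g t p`, and the last block is `g t c` times the same sum for `r < M_t`.
    obtain ⟨c, r, hc, hr, rfl⟩ : ∃ c r, c < m t ∧ r < Mf m t ∧ n = c * Mf m t + r :=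
      ⟨n / Mf m t, n % Mf m t, Nat.div_lt_of_lt_mul (by rwa [Mf_succ, mul_comm] at hn),
        Nat.mod_lt _ (Mf_pos hm t), (Nat.div_add_mod' n _).symm⟩
    rw [sum_range_add, sum_prod_digit_range_mul_Mf hm hc.le, sum_prod_digit hm,
      sum_prod_digit_mul_Mf_add hm hc hr.le, sum_range_succ, Ico_self, prod_empty, mul_one]
    have hfull : ‖(∏ l ∈ range t, ∑ s ∈ range (m l), g l s) * ∑ p ∈ range c, g t p‖₊ ≤
        m t * β t * ∏ l ∈ range t, σ l := by
      rw [nnnorm_mul, nnnorm_prod, mul_comm]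
      refine mul_le_mul' ?_ (prod_le_prod' fun l _ => hσ l)
      calc ‖∑ p ∈ range c, g t p‖₊ ≤ ∑ p ∈ range c, β t :=
            (nnnorm_sum_le _ _).trans
              (sum_le_sum fun p hp => hβ t p ((mem_range.mp hp).trans hc))
        _ = c * β t := by simp
        _ ≤ m t * β t := by gcongr
    have hpart : ‖(∑ u ∈ range r, ∏ l ∈ range t, g l (digit m l u)) * g t c‖₊ ≤
        ∑ t' ∈ range t, m t' * β t' * (∏ l ∈ range t', σ l) * ∏ l ∈ Ico (t' + 1) (t + 1), β l := by
      rw [nnnorm_mul]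
      refine (mul_le_mul' (nnnorm_sum_prod_digit_le hm g β σ hβ hσ t r hr) (hβ t c hc)).trans_eq ?_
      rw [sum_mul]
      refine sum_congr rfl fun t' ht' => ?_
      rw [prod_Ico_succ_top (mem_range.mp ht'), mul_assoc]
    exact (nnnorm_add_le _ _).trans ((add_le_add hfull hpart).trans_eq (add_comm _ _))

theorem rad_eq_pow (m : ℕ → ℕ) (k : ℕ) (x : ∀ j, ZMod (m j)) :
    rad m k x = exp (2 * Real.pi * I / m k) ^ (x k).val := by
  rw [← Complex.exp_nat_mul, rad]
  congr 1
  ring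

theorem rad_add (hm : ∀ k, 0 < m k) (k : ℕ) (x y : ∀ j, ZMod (m j)) :
    rad m k (x + y) = rad m k x * rad m k y := by
  have : NeZero (m k) := ⟨(hm k).ne'⟩
  have hζ := Complex.isPrimitiveRoot_exp (m k) (hm k).ne'
  rw [rad_eq_pow, rad_eq_pow, rad_eq_pow, ← pow_add, Pi.add_apply, ZMod.val_add]
  simpa [← hζ.eq_orderOf] using pow_mod_orderOf (exp (2 * Real.pi * I / m k)) _

theorem rad_pow_self (hm : ∀ k, 0 < m k) (k : ℕ) (x : ∀ j, ZMod (m j)) :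
    rad m k x ^ m k = 1 := by
  rw [rad_eq_pow, ← pow_mul, pow_mul',
    (Complex.isPrimitiveRoot_exp (m k) (hm k).ne').pow_eq_one, one_pow]

theorem rad_eq_one_iff (hm : ∀ k, 0 < m k) {k : ℕ} {x : ∀ j, ZMod (m j)} :
    rad m k x = 1 ↔ x k = 0 := by
  have : NeZero (m k) := ⟨(hm k).ne'⟩
  rw [rad_eq_pow, (Complex.isPrimitiveRoot_exp (m k) (hm k).ne').pow_eq_one_iff_dvd,
    ← ZMod.natCast_eq_zero_iff, ZMod.natCast_zmod_val]

theorem nnnorm_rad (m : ℕ → ℕ) (k : ℕ) (x : ∀ j, ZMod (m j)) : ‖rad m k x‖₊ = 1 := by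
  have h : rad m k x = exp ((2 * Real.pi * (x k).val / m k : ℝ) * I) := by
    rw [rad]; push_cast; ring_nf
  ext
  rw [h, coe_nnnorm, Complex.norm_exp_ofReal_mul_I, NNReal.coe_one]

theorem sum_rad_pow (hm : ∀ k, 0 < m k) (k : ℕ) (w : ∀ j, ZMod (m j)) :
    ∑ s ∈ range (m k), rad m k w ^ s = if w k = 0 then (m k : ℂ) else 0 := by
  split_ifs with h
  · simp [(rad_eq_one_iff hm).mpr h]
  · rw [geom_sum_eq (mt (rad_eq_one_iff hm).mp h), rad_pow_self hm, sub_self, zero_div]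

def zeroWeight (m : ℕ → ℕ) (w : ∀ j, ZMod (m j)) (l : ℕ) : ℝ≥0 :=
  if w l = 0 then m l else 0

theorem zeroWeight_le (m : ℕ → ℕ) (w : ∀ j, ZMod (m j)) (l : ℕ) : zeroWeight m w l ≤ m l := by
  unfold zeroWeight
  split_ifs <;> simp

theorem nnnorm_sum_rad_pow (hm : ∀ k, 0 < m k) (k : ℕ) (w : ∀ j, ZMod (m j)) :
    ‖∑ s ∈ range (m k), rad m k w ^ s‖₊ = zeroWeight m w k := by
  rw [sum_rad_pow hm, zeroWeight]
  split_ifs <;> simp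

theorem psi_eq_prod (hm : ∀ k, 2 ≤ m k) {n N : ℕ} (h : n < Mf m N) (x : ∀ j, ZMod (m j)) :
    psi m n x = ∏ k ∈ range N, rad m k x ^ digit m k n := by
  have hext : ∀ {N₁ N₂}, N₁ ≤ N₂ → n < Mf m N₁ →
      ∏ k ∈ range N₁, rad m k x ^ digit m k n = ∏ k ∈ range N₂, rad m k x ^ digit m k n :=
    fun hle hlt => prod_subset (range_subset_range.mpr hle) fun k _ hk => by
      rw [digit_eq_zero_of_lt (hlt.trans_le (Mf_le_Mf (fun k => zero_lt_two.trans_le (hm k))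
        (not_lt.mp (mt mem_range.mpr hk)))), pow_zero]
  exact (hext (Nat.le_add_left _ N) ((Nat.lt_succ_self n).trans (lt_Mf_self hm _))).trans
    (hext (Nat.le_add_right _ _) h).symm

theorem psi_add (hm : ∀ k, 2 ≤ m k) {j a b : ℕ} (ha : Mf m j ∣ a) (hb : b < Mf m j)
    (x : ∀ j, ZMod (m j)) : psi m (a + b) x = psi m a x * psi m b x := by
  have hN := lt_Mf_self hm (a + b)
  rw [psi_eq_prod hm hN, psi_eq_prod hm ((Nat.le_add_right a b).trans_lt hN),
    psi_eq_prod hm ((Nat.le_add_left b a).trans_lt hN), ← prod_mul_distrib]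
  refine prod_congr rfl fun l _ => ?_
  rw [digit_add (fun k => zero_lt_two.trans_le (hm k)) ha hb, pow_add]

theorem psi_mul_Mf (hm : ∀ k, 2 ≤ m k) {p j : ℕ} (hp : p < m j) (x : ∀ j, ZMod (m j)) :
    psi m (p * Mf m j) x = rad m j x ^ p := by
  have hN : p * Mf m j < Mf m (p * Mf m j + j + 1) :=
    (lt_Mf_self hm _).trans_le (Mf_le_Mf (fun k => zero_lt_two.trans_le (hm k)) (by omega))
  simp_rw [psi_eq_prod hm hN, digit_mul_Mf (fun k => zero_lt_two.trans_le (hm k)) hp,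
    pow_ite, pow_zero, prod_ite_eq', mem_range, if_pos (show j < p * Mf m j + j + 1 by omega)]

theorem psi_Mf (hm : ∀ k, 2 ≤ m k) (l : ℕ) (w : ∀ j, ZMod (m j)) :
    psi m (Mf m l) w = rad m l w := by
  simpa using psi_mul_Mf hm (show 1 < m l from hm l) w

theorem Dker_add (hm : ∀ k, 2 ≤ m k) {j a b : ℕ} (ha : Mf m j ∣ a) (hb : b ≤ Mf m j)
    (x : ∀ j, ZMod (m j)) : Dker m (a + b) x = Dker m a x + psi m a x * Dker m b x := by
  rw [Dker, Dker, Dker, sum_range_add, mul_sum]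
  exact congrArg _ (sum_congr rfl fun u hu => psi_add hm ha ((mem_range.mp hu).trans_le hb) x)

theorem Dker_mul_Mf (hm : ∀ k, 2 ≤ m k) {d j : ℕ} (hd : d ≤ m j) (x : ∀ j, ZMod (m j)) :
    Dker m (d * Mf m j) x = (∑ p ∈ range d, rad m j x ^ p) * Dker m (Mf m j) x := by
  induction d with
  | zero => simp [Dker]
  | succ d ih =>
    rw [Nat.succ_mul, Dker_add hm (dvd_mul_left _ _) le_rfl, ih (by omega),
      psi_mul_Mf hm (by omega), sum_range_succ, add_mul]

theorem Dker_Mf_eq_prod (hm : ∀ k, 2 ≤ m k) (t : ℕ) (w : ∀ j, ZMod (m j)) :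
    Dker m (Mf m t) w = ∏ l ∈ range t, ∑ s ∈ range (m l), rad m l w ^ s := by
  rw [← sum_prod_digit (fun k => zero_lt_two.trans_le (hm k))]
  exact sum_congr rfl fun k hk => psi_eq_prod hm (mem_range.mp hk) w

theorem nnnorm_Dker_Mf (hm : ∀ k, 2 ≤ m k) (t : ℕ) (w : ∀ j, ZMod (m j)) :
    ‖Dker m (Mf m t) w‖₊ = ∏ l ∈ range t, zeroWeight m w l := by
  rw [Dker_Mf_eq_prod hm, nnnorm_prod]
  exact prod_congr rfl fun l _ => nnnorm_sum_rad_pow (fun k => zero_lt_two.trans_le (hm k)) l w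

theorem nnnorm_Dker_Mf_le (hm : ∀ k, 2 ≤ m k) (t : ℕ) (w : ∀ j, ZMod (m j)) :
    ‖Dker m (Mf m t) w‖₊ ≤ Mf m t := by
  rw [nnnorm_Dker_Mf hm, Mf_eq_prod, Nat.cast_prod]
  exact prod_le_prod' fun l _ => zeroWeight_le m w l

theorem nnnorm_Dker_Mf_mul_le_mul (hm : ∀ k, 2 ≤ m k) {t : ℕ} {w : ∀ j, ZMod (m j)}
    {a b : ℝ≥0} (h : (∀ l < t, w l = 0) → a ≤ b) :
    ‖Dker m (Mf m t) w‖₊ * a ≤ ‖Dker m (Mf m t) w‖₊ * b := by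
  by_cases hw : ∀ l < t, w l = 0
  · exact mul_le_mul' le_rfl (h hw)
  · obtain ⟨l, hl, hwl⟩ := not_forall₂.mp hw
    rw [nnnorm_Dker_Mf hm, prod_eq_zero (mem_range.mpr hl) (by simp [zeroWeight, hwl]),
      zero_mul, zero_mul]

def kerCoeff (m : ℕ → ℕ) (j k : ℕ) (x : ∀ j, ZMod (m j)) : ℂ :=
  psi m (roundDown m (j + 1) k) x * ∑ p ∈ range (digit m j k), rad m j x ^ p

theorem Dker_roundDown_sub (hm : ∀ k, 2 ≤ m k) (j k : ℕ) (x : ∀ j, ZMod (m j)) :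
    Dker m (roundDown m j k) x - Dker m (roundDown m (j + 1) k) x =
      kerCoeff m j k x * Dker m (Mf m j) x := by
  have hlt := digit_lt (fun k => zero_lt_two.trans_le (hm k)) j k
  have hle : digit m j k * Mf m j ≤ Mf m (j + 1) := by
    rw [Mf_succ]
    exact Nat.mul_le_mul_right _ hlt.le
  rw [roundDown_eq_add m j k, Dker_add hm (a := roundDown m (j + 1) k) (dvd_mul_right _ _) hle,
    add_sub_cancel_left, Dker_mul_Mf hm hlt.le, kerCoeff, mul_assoc]

theorem Dker_eq_sum_kerCoeff (hm : ∀ k, 2 ≤ m k) {A k : ℕ} (hk : k < Mf m (A + 1))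
    (x : ∀ j, ZMod (m j)) :
    Dker m k x = ∑ j ∈ range (A + 1), kerCoeff m j k x * Dker m (Mf m j) x := by
  simp_rw [← Dker_roundDown_sub hm]
  have h0 : roundDown m 0 k = k := by simp [roundDown, Mf]
  have hA : roundDown m (A + 1) k = 0 := by simp [roundDown, Nat.div_eq_of_lt hk]
  rw [sum_range_sub' (fun j => Dker m (roundDown m j k) x), h0, hA]
  simp [Dker]

def coeffFactor (m : ℕ → ℕ) (j : ℕ) (x : ∀ j, ZMod (m j)) (l s : ℕ) : ℂ :=
  if l = j then ∑ p ∈ range s, rad m j x ^ p else rad m l x ^ s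

theorem kerCoeff_eq_prod (hm : ∀ k, 2 ≤ m k) {j t k : ℕ} (hjt : j < t) (hk : k < Mf m t)
    (x : ∀ j, ZMod (m j)) (hx : ∀ l < j, x l = 0) :
    kerCoeff m j k x = ∏ l ∈ range t, coeffFactor m j x l (digit m l k) := by
  have hm₀ : ∀ k, 0 < m k := fun k => zero_lt_two.trans_le (hm k)
  have hpsi : psi m (roundDown m (j + 1) k) x =
      ∏ l ∈ range t, if l = j then 1 else rad m l x ^ digit m l k := by
    rw [psi_eq_prod hm ((roundDown_le m _ k).trans_lt hk)]
    refine prod_congr rfl fun l _ => ?_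
    rw [digit_roundDown hm₀]
    rcases lt_trichotomy l j with hl | rfl | hl
    · simp [hl.ne, (rad_eq_one_iff hm₀).mpr (hx l hl)]
    · simp
    · simp [hl.ne', show ¬ l < j + 1 by omega]
  have hsplit : ∀ l s, coeffFactor m j x l s = (if l = j then 1 else rad m l x ^ s) *
      if l = j then ∑ p ∈ range s, rad m j x ^ p else 1 := by
    intro l s
    unfold coeffFactor
    split_ifs <;> simp
  simp_rw [kerCoeff, hpsi, hsplit, prod_mul_distrib, prod_ite_eq', mem_range, if_pos hjt]

theorem nnnorm_coeffFactor_le {B : ℕ} (j : ℕ) (x : ∀ j, ZMod (m j)) (l : ℕ) {s : ℕ}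
    (hs : s ≤ B) : ‖coeffFactor m j x l s‖₊ ≤ if l = j then (B : ℝ≥0) else 1 := by
  unfold coeffFactor
  split_ifs
  · refine (nnnorm_sum_le _ _).trans ?_
    simp only [nnnorm_pow, nnnorm_rad, one_pow, sum_const, card_range, nsmul_eq_mul, mul_one]
    exact_mod_cast hs
  · rw [nnnorm_pow, nnnorm_rad, one_pow]

theorem prod_ite_mem_le {ι : Type*} [DecidableEq ι] (S T : Finset ι) {c : ℝ≥0} (hc : 1 ≤ c)
    (f : ι → ℝ≥0) : ∏ l ∈ S, (if l ∈ T then c else f l) ≤ c ^ #T * ∏ l ∈ S \ T, f l := by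
  rw [prod_ite, prod_const, filter_mem_eq_inter, filter_notMem_eq_sdiff]
  exact mul_le_mul' (pow_le_pow_right₀ hc (card_le_card inter_subset_right)) le_rfl

theorem nnnorm_coeffFactor_mul_le {B : ℕ} (hB : 1 ≤ B) (i j : ℕ) (x y : ∀ j, ZMod (m j))
    (l : ℕ) {s : ℕ} (hs : s ≤ B) :
    ‖coeffFactor m j x l s * coeffFactor m i y l s‖₊ ≤
      if l ∈ ({i, j} : Finset ℕ) then (B : ℝ≥0) ^ 2 else 1 := by
  have hB1 : (1 : ℝ≥0) ≤ B := by exact_mod_cast hB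
  rw [nnnorm_mul]
  refine (mul_le_mul' (nnnorm_coeffFactor_le j x l hs) (nnnorm_coeffFactor_le i y l hs)).trans ?_
  simp only [mem_insert, mem_singleton]
  split_ifs <;> simp_all [sq, le_mul_of_one_le_left]

theorem nnnorm_sum_coeffFactor_mul_le (hm : ∀ k, 2 ≤ m k) {B : ℕ} (hB : ∀ k, m k ≤ B)
    (i j : ℕ) (x y : ∀ j, ZMod (m j)) (l : ℕ) :
    ‖∑ s ∈ range (m l), coeffFactor m j x l s * coeffFactor m i y l s‖₊ ≤
      if l ∈ ({i, j} : Finset ℕ) then (B : ℝ≥0) ^ 3 else zeroWeight m (x + y) l := by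
  have hm₀ : ∀ k, 0 < m k := fun k => zero_lt_two.trans_le (hm k)
  split_ifs with hl
  · calc _ ≤ ∑ s ∈ range (m l), (B : ℝ≥0) ^ 2 :=
          (nnnorm_sum_le _ _).trans (sum_le_sum fun s hs =>
            (nnnorm_coeffFactor_mul_le (by linarith [hm l, hB l]) i j x y l
              ((mem_range.mp hs).le.trans (hB l))).trans_eq (if_pos hl))
      _ ≤ B * B ^ 2 := by
          simp only [sum_const, card_range, nsmul_eq_mul]
          gcongr
          exact_mod_cast hB l
      _ = B ^ 3 := by ring
  · simp only [mem_insert, mem_singleton, not_or] at hl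
    simp only [coeffFactor, if_neg hl.1, if_neg hl.2, ← mul_pow, ← rad_add hm₀]
    exact (nnnorm_sum_rad_pow hm₀ l (x + y)).le

theorem nnnorm_sum_kerCoeff_mul_le (hm : ∀ k, 2 ≤ m k) {B : ℕ} (hB : ∀ k, m k ≤ B)
    {A i j n : ℕ} (hi : i ≤ A) (hj : j ≤ A) (hn : n < Mf m (A + 1)) (x y : ∀ j, ZMod (m j))
    (hx : ∀ l < j, x l = 0) (hy : ∀ l < i, y l = 0) :
    ‖∑ k ∈ range n, kerCoeff m j k x * kerCoeff m i k y‖₊ ≤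
      B ^ 13 * ∑ t ∈ range (A + 1), ∏ l ∈ range t \ {i, j}, zeroWeight m (x + y) l := by
  have hB1 : (1 : ℝ≥0) ≤ B := by exact_mod_cast (show 1 ≤ B by linarith [hm 0, hB 0])
  set β : ℕ → ℝ≥0 := fun l => if l ∈ ({i, j} : Finset ℕ) then (B : ℝ≥0) ^ 2 else 1
  set σ : ℕ → ℝ≥0 := fun l =>
    if l ∈ ({i, j} : Finset ℕ) then (B : ℝ≥0) ^ 3 else zeroWeight m (x + y) l
  have hpair : ∀ c : ℝ≥0, 1 ≤ c → ∀ (S : Finset ℕ) (f : ℕ → ℝ≥0),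
      ∏ l ∈ S, (if l ∈ ({i, j} : Finset ℕ) then c else f l) ≤ c ^ 2 * ∏ l ∈ S \ {i, j}, f l :=
    fun c hc S f => (prod_ite_mem_le S _ hc f).trans
      (mul_le_mul' (pow_le_pow_right₀ hc card_le_two) le_rfl)
  have hmβ : ∀ t, (m t : ℝ≥0) * β t ≤ B ^ 3 := fun t => by
    calc (m t : ℝ≥0) * β t ≤ B * B ^ 2 := by
          gcongr
          · exact_mod_cast hB t
          · simp only [β]; split_ifs <;> simp [one_le_pow₀ hB1]
      _ = B ^ 3 := by ring
  calc ‖∑ k ∈ range n, kerCoeff m j k x * kerCoeff m i k y‖₊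
      = ‖∑ k ∈ range n, ∏ l ∈ range (A + 1),
          coeffFactor m j x l (digit m l k) * coeffFactor m i y l (digit m l k)‖₊ := by
        refine congrArg _ (sum_congr rfl fun k hk => ?_)
        have hk' := (mem_range.mp hk).trans hn
        rw [kerCoeff_eq_prod hm (by omega) hk' x hx, kerCoeff_eq_prod hm (by omega) hk' y hy,
          ← prod_mul_distrib]
    _ ≤ ∑ t ∈ range (A + 1), m t * β t * (∏ l ∈ range t, σ l) * ∏ l ∈ Ico (t + 1) (A + 1), β l :=
        nnnorm_sum_prod_digit_le (fun k => zero_lt_two.trans_le (hm k)) _ β σ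
          (fun l s hs => nnnorm_coeffFactor_mul_le (by linarith [hm l, hB l]) i j x y l
            (hs.le.trans (hB l)))
          (nnnorm_sum_coeffFactor_mul_le hm hB i j x y) (A + 1) n hn
    _ ≤ ∑ t ∈ range (A + 1), B ^ 3 * ((B ^ 3) ^ 2 * ∏ l ∈ range t \ {i, j},
          zeroWeight m (x + y) l) * ((B ^ 2) ^ 2 * ∏ l ∈ Ico (t + 1) (A + 1) \ {i, j}, 1) :=
        sum_le_sum fun t _ => mul_le_mul' (mul_le_mul' (hmβ t) (hpair _ (one_le_pow₀ hB1) _ _))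
          (hpair _ (one_le_pow₀ hB1) _ _)
    _ = B ^ 13 * ∑ t ∈ range (A + 1), ∏ l ∈ range t \ {i, j}, zeroWeight m (x + y) l := by
        rw [mul_sum]
        refine sum_congr rfl fun t _ => ?_
        rw [prod_const_one]
        ring

theorem natCast_mul_nnnorm_MKer (m : ℕ → ℕ) (n : ℕ) (x y : ∀ j, ZMod (m j)) :
    (n : ℝ≥0) * ‖MKer m n x y‖₊ = ‖∑ k ∈ range n, Dker m k x * Dker m k y‖₊ := by
  rcases eq_or_ne n 0 with rfl | hn
  · simp
  · rw [MKer, nnnorm_mul, nnnorm_inv, nnnorm_natCast, ← mul_assoc,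
      mul_inv_cancel₀ (Nat.cast_ne_zero.mpr hn), one_mul]

theorem sum_Dker_mul_Dker_eq (hm : ∀ k, 2 ≤ m k) {A n : ℕ} (hn : n ≤ Mf m (A + 1))
    (x y : ∀ j, ZMod (m j)) :
    ∑ k ∈ range n, Dker m k x * Dker m k y =
      ∑ j ∈ range (A + 1), ∑ i ∈ range (A + 1), Dker m (Mf m j) x * Dker m (Mf m i) y *
        ∑ k ∈ range n, kerCoeff m j k x * kerCoeff m i k y := by
  calc ∑ k ∈ range n, Dker m k x * Dker m k y
      = ∑ k ∈ range n, ∑ j ∈ range (A + 1), ∑ i ∈ range (A + 1),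
          kerCoeff m j k x * Dker m (Mf m j) x * (kerCoeff m i k y * Dker m (Mf m i) y) :=
        sum_congr rfl fun k hk => by
          have hk' := (mem_range.mp hk).trans_le hn
          rw [Dker_eq_sum_kerCoeff hm hk' x, Dker_eq_sum_kerCoeff hm hk' y, sum_mul_sum]
    _ = _ := by
        rw [sum_comm]
        refine sum_congr rfl fun j _ => ?_
        rw [sum_comm]
        refine sum_congr rfl fun i _ => ?_
        rw [mul_sum]
        exact sum_congr rfl fun k _ => by ring

theorem sum_sum_le_sum_sum_range_succ_add (F : ℕ → ℕ → ℝ≥0) (N : ℕ) :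
    ∑ j ∈ range N, ∑ i ∈ range N, F j i ≤
      ∑ j ∈ range N, ∑ i ∈ range (j + 1), F j i + ∑ i ∈ range N, ∑ j ∈ range (i + 1), F j i := by
  calc ∑ j ∈ range N, ∑ i ∈ range N, F j i
      = ∑ j ∈ range N, ∑ i ∈ range (j + 1), F j i +
          ∑ j ∈ range N, ∑ i ∈ Ico (j + 1) N, F j i := by
        rw [← sum_add_distrib]
        exact sum_congr rfl fun j hj => (sum_range_add_sum_Ico _ (mem_range.mp hj)).symm
    _ = ∑ j ∈ range N, ∑ i ∈ range (j + 1), F j i + ∑ i ∈ range N, ∑ j ∈ range i, F j i := by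
        congr 1
        exact sum_comm' fun j i => by simp only [mem_range, mem_Ico]; omega
    _ ≤ _ := by gcongr with i; exact i.le_succ

def pairWeight (m : ℕ → ℕ) (A : ℕ) (x y : ∀ j, ZMod (m j)) : ℝ≥0 :=
  ∑ j ∈ range (A + 1), ∑ i ∈ range (j + 1),
    ‖Dker m (Mf m j) x‖₊ * ‖Dker m (Mf m i) y‖₊ *
      ∑ t ∈ range (A + 1), ∏ l ∈ range t \ {i, j}, zeroWeight m (x + y) l

theorem nnnorm_sum_Dker_mul_Dker_le (hm : ∀ k, 2 ≤ m k) {B : ℕ} (hB : ∀ k, m k ≤ B)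
    {A n : ℕ} (hn : n < Mf m (A + 1)) (x y : ∀ j, ZMod (m j)) :
    ‖∑ k ∈ range n, Dker m k x * Dker m k y‖₊ ≤
      B ^ 13 * (pairWeight m A x y + pairWeight m A y x) := by
  set P : ℕ → ℕ → ℝ≥0 := fun j i => ‖Dker m (Mf m j) x‖₊ * ‖Dker m (Mf m i) y‖₊ *
    ∑ t ∈ range (A + 1), ∏ l ∈ range t \ {i, j}, zeroWeight m (x + y) l
  have hterm : ∀ j ∈ range (A + 1), ∀ i ∈ range (A + 1),
      ‖Dker m (Mf m j) x * Dker m (Mf m i) y *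
        ∑ k ∈ range n, kerCoeff m j k x * kerCoeff m i k y‖₊ ≤ B ^ 13 * P j i := by
    intro j hj i hi
    rw [nnnorm_mul, nnnorm_mul, mul_assoc, mul_left_comm (B ^ 13 : ℝ≥0), mul_assoc]
    refine nnnorm_Dker_Mf_mul_le_mul hm fun hx => nnnorm_Dker_Mf_mul_le_mul hm fun hy => ?_
    exact nnnorm_sum_kerCoeff_mul_le hm hB (by simpa [Nat.lt_succ_iff] using hi)
      (by simpa [Nat.lt_succ_iff] using hj) hn x y hx hy
  have hswap : ∑ i ∈ range (A + 1), ∑ j ∈ range (i + 1), P j i = pairWeight m A y x := by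
    refine sum_congr rfl fun i _ => sum_congr rfl fun j _ => ?_
    simp only [P]
    rw [add_comm x y, pair_comm i j, mul_comm ‖Dker m (Mf m j) x‖₊]
  rw [sum_Dker_mul_Dker_eq hm hn.le]
  calc _ ≤ ∑ j ∈ range (A + 1), ∑ i ∈ range (A + 1), B ^ 13 * P j i :=
        (nnnorm_sum_le _ _).trans (sum_le_sum fun j hj =>
          (nnnorm_sum_le _ _).trans (sum_le_sum (hterm j hj)))
    _ = B ^ 13 * ∑ j ∈ range (A + 1), ∑ i ∈ range (A + 1), P j i := by simp only [mul_sum]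
    _ ≤ _ := mul_le_mul' le_rfl ((sum_sum_le_sum_sum_range_succ_add P _).trans_eq
        (congrArg _ hswap))

theorem sub_nsmul_evec_apply_of_ne (x : ∀ j, ZMod (m j)) (v : ℕ) {s l : ℕ} (h : l ≠ s) :
    (x - v • evec m s) l = x l := by
  simp [evec, h]

theorem sub_nsmul_evec_apply_self (x : ∀ j, ZMod (m j)) (v s : ℕ) :
    (x - v • evec m s) s = x s - v := by
  simp [evec]

theorem nnnorm_Dker_Mf_congr (hm : ∀ k, 2 ≤ m k) {t : ℕ} {w w' : ∀ j, ZMod (m j)}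
    (h : ∀ l < t, w l = w' l) : ‖Dker m (Mf m t) w‖₊ = ‖Dker m (Mf m t) w'‖₊ := by
  simp only [nnnorm_Dker_Mf hm, zeroWeight]
  exact prod_congr rfl fun l hl => by rw [h l (mem_range.mp hl)]

theorem nnnorm_Dker_Mf_le_sum_sub (hm : ∀ k, 2 ≤ m k) (t : ℕ) (y : ∀ j, ZMod (m j)) :
    ‖Dker m (Mf m t) y‖₊ ≤
      ∑ v ∈ Icc 1 (m t - 1), ‖Dker m (Mf m t) (y - v • evec m t)‖₊ := by
  have h1 : 1 ∈ Icc 1 (m t - 1) := mem_Icc.mpr ⟨le_rfl, by have := hm t; omega⟩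
  refine le_of_eq_of_le ?_ (single_le_sum (fun v _ => zero_le) h1)
  exact nnnorm_Dker_Mf_congr hm fun l hl => (sub_nsmul_evec_apply_of_ne y 1 hl.ne).symm

theorem prod_zeroWeight_le_Mf (hm : ∀ k, 0 < m k) {S : Finset ℕ} {t : ℕ} (hS : S ⊆ range t)
    (w : ∀ j, ZMod (m j)) : ∏ l ∈ S, zeroWeight m w l ≤ Mf m t := by
  rw [Mf_eq_prod, Nat.cast_prod]
  refine (prod_le_prod' fun l _ => zeroWeight_le m w l).trans ?_
  exact prod_le_prod_of_subset_of_one_le' hS fun l _ _ => by exact_mod_cast hm l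

/-- Choosing `v = y_i` clears coordinate `i`, which turns the product into `D_{M_t}(y - v e_i)`
up to the factor `m_i`. -/
theorem prod_sdiff_singleton_zeroWeight_le (hm : ∀ k, 2 ≤ m k) (i t : ℕ)
    (y : ∀ j, ZMod (m j)) :
    ∏ l ∈ range t \ {i}, zeroWeight m y l ≤
      ‖Dker m (Mf m t) y‖₊ + ∑ v ∈ Icc 1 (m i - 1), ‖Dker m (Mf m t) (y - v • evec m i)‖₊ := by
  have : NeZero (m i) := ⟨(zero_lt_two.trans_le (hm i)).ne'⟩
  rw [sdiff_singleton_eq_erase]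
  by_cases hit : i < t
  · set v₀ := (y i).val
    have key : ∏ l ∈ (range t).erase i, zeroWeight m y l ≤
        ‖Dker m (Mf m t) (y - v₀ • evec m i)‖₊ := by
      rw [nnnorm_Dker_Mf hm, ← mul_prod_erase _ _ (mem_range.mpr hit)]
      have hi : zeroWeight m (y - v₀ • evec m i) i = m i := by
        rw [zeroWeight, sub_nsmul_evec_apply_self, ZMod.natCast_zmod_val, sub_self, if_pos rfl]
      rw [hi, prod_congr rfl fun l hl => show zeroWeight m (y - v₀ • evec m i) l = zeroWeight m y l
        by rw [zeroWeight, zeroWeight, sub_nsmul_evec_apply_of_ne y v₀ (ne_of_mem_erase hl)]]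
      exact le_mul_of_one_le_left zero_le (by exact_mod_cast (zero_lt_two.trans_le (hm i)))
    rcases Nat.eq_zero_or_pos v₀ with h0 | hpos
    · simpa [h0] using key.trans le_self_add
    · have hv₀ : v₀ ∈ Icc 1 (m i - 1) := mem_Icc.mpr ⟨hpos, by have := ZMod.val_lt (y i); omega⟩
      exact key.trans ((single_le_sum (f := fun v => ‖Dker m (Mf m t) (y - v • evec m i)‖₊)
        (fun v _ => zero_le) hv₀).trans le_add_self)
  · rw [erase_eq_of_notMem (by simpa using hit), ← nnnorm_Dker_Mf hm]
    exact le_self_add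

theorem sum_range_succ_Mf_le (hm : ∀ k, 2 ≤ m k) (i : ℕ) :
    ∑ t ∈ range (i + 1), (Mf m t : ℝ≥0) ≤ 2 * Mf m i := by
  rw [sum_range_succ, two_mul]
  gcongr
  exact_mod_cast sum_range_Mf_le hm i

theorem sum_sum_Ico_Mf_mul_le (hm : ∀ k, 2 ≤ m k) (E : ℕ → ℝ≥0) (j : ℕ) :
    ∑ i ∈ range (j + 1), ∑ t ∈ Ico (i + 1) (j + 1), (Mf m i : ℝ≥0) * E t ≤
      ∑ t ∈ range (j + 1), Mf m t * E t := by
  calc _ = ∑ t ∈ range (j + 1), (∑ i ∈ range t, (Mf m i : ℝ≥0)) * E t := by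
        simp_rw [sum_mul]
        exact sum_comm' fun i t => by simp only [mem_range, mem_Ico]; omega
    _ ≤ _ := by
        gcongr with t
        exact_mod_cast sum_range_Mf_le hm t

theorem nnnorm_Dker_mul_sum_prod_le (hm : ∀ k, 2 ≤ m k) {i j : ℕ} (hij : i ≤ j)
    (y : ∀ j, ZMod (m j)) :
    ‖Dker m (Mf m i) y‖₊ * ∑ t ∈ range (j + 1), ∏ l ∈ range t \ {i}, zeroWeight m y l ≤
      2 * (Mf m i * ∑ v ∈ Icc 1 (m i - 1), ‖Dker m (Mf m i) (y - v • evec m i)‖₊) +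
        Mf m i * ∑ t ∈ Ico (i + 1) (j + 1), (‖Dker m (Mf m t) y‖₊ +
          ∑ v ∈ Icc 1 (m i - 1), ‖Dker m (Mf m t) (y - v • evec m i)‖₊) := by
  rw [← sum_range_add_sum_Ico _ (show i + 1 ≤ j + 1 by omega), mul_add]
  refine add_le_add ?_ (mul_le_mul' (nnnorm_Dker_Mf_le hm i y)
    (sum_le_sum fun t _ => prod_sdiff_singleton_zeroWeight_le hm i t y))
  calc ‖Dker m (Mf m i) y‖₊ * ∑ t ∈ range (i + 1), ∏ l ∈ range t \ {i}, zeroWeight m y l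
      ≤ ‖Dker m (Mf m i) y‖₊ * ∑ t ∈ range (i + 1), (Mf m t : ℝ≥0) := by
        gcongr with t
        exact prod_zeroWeight_le_Mf (fun k => zero_lt_two.trans_le (hm k)) sdiff_subset y
    _ ≤ ‖Dker m (Mf m i) y‖₊ * (2 * Mf m i) := by gcongr; exact sum_range_succ_Mf_le hm i
    _ = 2 * (Mf m i * ‖Dker m (Mf m i) y‖₊) := by ring
    _ ≤ _ := by gcongr; exact nnnorm_Dker_Mf_le_sum_sub hm i y

theorem sum_nnnorm_Dker_mul_sum_prod_le (hm : ∀ k, 2 ≤ m k) (j : ℕ) (y : ∀ j, ZMod (m j)) :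
    ∑ i ∈ range (j + 1), ‖Dker m (Mf m i) y‖₊ *
        ∑ t ∈ range (j + 1), ∏ l ∈ range t \ {i}, zeroWeight m y l ≤
      4 * ∑ s ∈ range (j + 1), (Mf m s : ℝ≥0) *
        ∑ i ∈ Icc s j, ∑ v ∈ Icc 1 (m s - 1), ‖Dker m (Mf m i) (y - v • evec m s)‖₊ := by
  set E : ℕ → ℝ≥0 := fun t => ‖Dker m (Mf m t) y‖₊
  set V : ℕ → ℕ → ℝ≥0 := fun i t => ∑ v ∈ Icc 1 (m i - 1), ‖Dker m (Mf m t) (y - v • evec m i)‖₊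
  set Y := ∑ s ∈ range (j + 1), (Mf m s : ℝ≥0) * ∑ t ∈ Icc s j, V s t
  have hdiag : ∑ i ∈ range (j + 1), Mf m i * V i i ≤ Y :=
    sum_le_sum fun i hi => mul_le_mul' le_rfl (single_le_sum (f := V i) (fun _ _ => zero_le)
      (mem_Icc.mpr ⟨le_rfl, Nat.lt_succ_iff.mp (mem_range.mp hi)⟩))
  have hoff : ∑ i ∈ range (j + 1), Mf m i * ∑ t ∈ Ico (i + 1) (j + 1), V i t ≤ Y :=
    sum_le_sum fun i _ => mul_le_mul' le_rfl (sum_le_sum_of_subset fun t ht => by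
      simp only [mem_Ico, mem_Icc] at ht ⊢; omega)
  have hlow : ∑ i ∈ range (j + 1), ∑ t ∈ Ico (i + 1) (j + 1), (Mf m i : ℝ≥0) * E t ≤ Y :=
    (sum_sum_Ico_Mf_mul_le hm E j).trans (hdiag.trans' (sum_le_sum fun t _ =>
      mul_le_mul' le_rfl (nnnorm_Dker_Mf_le_sum_sub hm t y)))
  calc _ ≤ ∑ i ∈ range (j + 1),
        (2 * (Mf m i * V i i) + Mf m i * ∑ t ∈ Ico (i + 1) (j + 1), (E t + V i t)) :=
        sum_le_sum fun i hi =>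
          nnnorm_Dker_mul_sum_prod_le hm (Nat.lt_succ_iff.mp (mem_range.mp hi)) y
    _ = 2 * ∑ i ∈ range (j + 1), Mf m i * V i i +
          (∑ i ∈ range (j + 1), ∑ t ∈ Ico (i + 1) (j + 1), (Mf m i : ℝ≥0) * E t +
            ∑ i ∈ range (j + 1), Mf m i * ∑ t ∈ Ico (i + 1) (j + 1), V i t) := by
        rw [sum_add_distrib, ← mul_sum, ← sum_add_distrib]
        refine congrArg _ (sum_congr rfl fun i _ => ?_)
        rw [sum_add_distrib, mul_add, mul_sum]
    _ ≤ 2 * Y + (Y + Y) := add_le_add (mul_le_mul' le_rfl hdiag) (add_le_add hlow hoff)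
    _ = 4 * Y := by ring

theorem sum_nnnorm_Dker_mul_prod_le (hm : ∀ k, 2 ≤ m k) (j : ℕ) (y : ∀ j, ZMod (m j)) :
    ∑ i ∈ range (j + 1), ‖Dker m (Mf m i) y‖₊ * ∏ l ∈ range j \ {i}, zeroWeight m y l ≤
      3 * ∑ q ∈ range (j + 1), (Mf m q : ℝ≥0) *
        ∑ v ∈ Icc 1 (m q - 1), ‖Dker m (Mf m j) (y - v • evec m q)‖₊ := by
  set V : ℕ → ℝ≥0 := fun i => ∑ v ∈ Icc 1 (m i - 1), ‖Dker m (Mf m j) (y - v • evec m i)‖₊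
  set Z := ∑ q ∈ range (j + 1), (Mf m q : ℝ≥0) * V q
  have hjZ : Mf m j * V j ≤ Z := single_le_sum (f := fun q => (Mf m q : ℝ≥0) * V q)
    (fun _ _ => zero_le) (self_mem_range_succ j)
  calc _ ≤ ∑ i ∈ range (j + 1), (Mf m i : ℝ≥0) * (‖Dker m (Mf m j) y‖₊ + V i) :=
        sum_le_sum fun i _ =>
          mul_le_mul' (nnnorm_Dker_Mf_le hm i y) (prod_sdiff_singleton_zeroWeight_le hm i j y)
    _ = (∑ i ∈ range (j + 1), (Mf m i : ℝ≥0)) * ‖Dker m (Mf m j) y‖₊ + Z := by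
        simp only [mul_add, sum_add_distrib, sum_mul, Z]
    _ ≤ 2 * Mf m j * V j + Z := by
        gcongr
        · exact sum_range_succ_Mf_le hm j
        · exact nnnorm_Dker_Mf_le_sum_sub hm j y
    _ ≤ 3 * Z := by rw [mul_assoc]; linarith [hjZ]

theorem rr_comm (m : ℕ → ℕ) (a b : ℕ) (x y : ∀ j, ZMod (m j)) :
    rr m a b y x = rr m a b x y := by
  rw [rr, rr, add_comm]

theorem nnnorm_rr (hm : ∀ k, 2 ≤ m k) (a b : ℕ) (x y : ∀ j, ZMod (m j)) :
    ‖rr m a b x y‖₊ = ∏ l ∈ Icc a b, zeroWeight m (x + y) l := by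
  rw [rr, nnnorm_prod]
  exact prod_congr rfl fun l _ => by
    rw [psi_Mf hm, nnnorm_sum_rad_pow (fun k => zero_lt_two.trans_le (hm k))]

theorem zeroWeight_add_of_eq_zero {x : ∀ j, ZMod (m j)} {l : ℕ} (hx : x l = 0)
    (y : ∀ j, ZMod (m j)) : zeroWeight m (x + y) l = zeroWeight m y l := by
  simp [zeroWeight, hx]

theorem prod_sdiff_pair_zeroWeight_of_le {j t : ℕ} {x : ∀ j, ZMod (m j)}
    (hx : ∀ l < j, x l = 0) (i : ℕ) (ht : t ≤ j) (y : ∀ j, ZMod (m j)) :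
    ∏ l ∈ range t \ {i, j}, zeroWeight m (x + y) l = ∏ l ∈ range t \ {i}, zeroWeight m y l := by
  have hS : range t \ {i, j} = range t \ {i} := by
    ext l
    simp only [mem_sdiff, mem_range, mem_insert, mem_singleton]
    omega
  rw [hS]
  exact prod_congr rfl fun l hl =>
    zeroWeight_add_of_eq_zero (hx l ((mem_range.mp (mem_sdiff.mp hl).1).trans_le ht)) y

theorem prod_sdiff_pair_zeroWeight_of_lt (hm : ∀ k, 2 ≤ m k) {i j t : ℕ}
    {x : ∀ j, ZMod (m j)} (hx : ∀ l < j, x l = 0) (hij : i ≤ j) (hjt : j < t)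
    (y : ∀ j, ZMod (m j)) :
    ∏ l ∈ range t \ {i, j}, zeroWeight m (x + y) l =
      (∏ l ∈ range j \ {i}, zeroWeight m y l) * ‖rr m (j + 1) (t - 1) x y‖₊ := by
  have hS : range t \ {i, j} = (range j \ {i}) ∪ Icc (j + 1) (t - 1) := by
    ext l
    simp only [mem_sdiff, mem_range, mem_insert, mem_singleton, mem_union, mem_Icc]
    omega
  rw [hS, prod_union (disjoint_left.mpr fun l h1 h2 => by
    simp only [mem_sdiff, mem_range, mem_Icc] at h1 h2; omega), nnnorm_rr hm]
  congr 1
  exact prod_congr rfl fun l hl =>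
    zeroWeight_add_of_eq_zero (hx l (mem_range.mp (mem_sdiff.mp hl).1)) y

theorem sum_nnnorm_Dker_mul_sum_prod_pair_le (hm : ∀ k, 2 ≤ m k) {A j : ℕ} (hj : j ≤ A)
    (x y : ∀ j, ZMod (m j)) (hx : ∀ l < j, x l = 0) :
    ∑ i ∈ range (j + 1), ‖Dker m (Mf m i) y‖₊ *
        ∑ t ∈ range (A + 1), ∏ l ∈ range t \ {i, j}, zeroWeight m (x + y) l ≤
      4 * (∑ s ∈ range (j + 1), (Mf m s : ℝ≥0) *
        ∑ i ∈ Icc s j, ∑ v ∈ Icc 1 (m s - 1), ‖Dker m (Mf m i) (y - v • evec m s)‖₊) +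
      3 * ∑ t ∈ Ico (j + 1) (A + 1), ‖rr m (j + 1) (t - 1) x y‖₊ *
        ∑ q ∈ range (j + 1), (Mf m q : ℝ≥0) *
          ∑ v ∈ Icc 1 (m q - 1), ‖Dker m (Mf m j) (y - v • evec m q)‖₊ := by
  have hsplit : ∀ i ∈ range (j + 1), ‖Dker m (Mf m i) y‖₊ *
      ∑ t ∈ range (A + 1), ∏ l ∈ range t \ {i, j}, zeroWeight m (x + y) l =
        ‖Dker m (Mf m i) y‖₊ * ∑ t ∈ range (j + 1), ∏ l ∈ range t \ {i}, zeroWeight m y l +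
        ∑ t ∈ Ico (j + 1) (A + 1), ‖rr m (j + 1) (t - 1) x y‖₊ *
          (‖Dker m (Mf m i) y‖₊ * ∏ l ∈ range j \ {i}, zeroWeight m y l) := by
    intro i hi
    rw [← sum_range_add_sum_Ico _ (by omega : j + 1 ≤ A + 1), mul_add]
    congr 1
    · exact congrArg _ (sum_congr rfl fun t ht =>
        prod_sdiff_pair_zeroWeight_of_le hx i (Nat.lt_succ_iff.mp (mem_range.mp ht)) y)
    · rw [mul_sum]
      refine sum_congr rfl fun t ht => ?_
      rw [prod_sdiff_pair_zeroWeight_of_lt hm hx (Nat.lt_succ_iff.mp (mem_range.mp hi))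
        (mem_Ico.mp ht).1 y]
      ring
  rw [sum_congr rfl hsplit, sum_add_distrib, sum_comm]
  refine add_le_add (sum_nnnorm_Dker_mul_sum_prod_le hm j y) ?_
  rw [mul_sum]
  refine sum_le_sum fun t _ => ?_
  rw [← mul_sum, mul_left_comm]
  gcongr
  exact sum_nnnorm_Dker_mul_prod_le hm j y

def rrBound (m : ℕ → ℕ) (A : ℕ) (x y : ∀ j, ZMod (m j)) : ℝ≥0 :=
  ∑ j ∈ range (A + 1), ∑ q ∈ range j, ∑ k ∈ Icc q (j - 1),
    ‖rr m (k + 1) (j - 1) x y‖₊ * (Mf m q : ℝ≥0) * ‖Dker m (Mf m k) x‖₊ *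
      ∑ v ∈ Icc 1 (m q - 1), ‖Dker m (Mf m k) (y - v • evec m q)‖₊

def diagBound (m : ℕ → ℕ) (A : ℕ) (x y : ∀ j, ZMod (m j)) : ℝ≥0 :=
  ∑ j ∈ range (A + 1), ‖Dker m (Mf m j) x‖₊ *
    ∑ s ∈ range (j + 1), (Mf m s : ℝ≥0) *
      ∑ i ∈ Icc s j, ∑ v ∈ Icc 1 (m s - 1), ‖Dker m (Mf m i) (y - v • evec m s)‖₊

theorem pairWeight_le (hm : ∀ k, 2 ≤ m k) (A : ℕ) (x y : ∀ j, ZMod (m j)) :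
    pairWeight m A x y ≤ 4 * (rrBound m A x y + diagBound m A x y) := by
  set Z : ℕ → ℕ → ℝ≥0 := fun j q => (Mf m q : ℝ≥0) *
    ∑ v ∈ Icc 1 (m q - 1), ‖Dker m (Mf m j) (y - v • evec m q)‖₊
  have hreindex : ∑ j ∈ range (A + 1), ‖Dker m (Mf m j) x‖₊ *
      ∑ t ∈ Ico (j + 1) (A + 1), ‖rr m (j + 1) (t - 1) x y‖₊ * ∑ q ∈ range (j + 1), Z j q =
        rrBound m A x y := by
    conv_lhs => simp only [mul_sum]
    rw [sum_comm' (t' := range (A + 1)) (s' := fun t => range t)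
      fun j t => by simp only [mem_range, mem_Ico]; omega]
    refine sum_congr rfl fun t ht => ?_
    rw [sum_comm' (t' := range t) (s' := fun q => Icc q (t - 1))
      fun j q => by simp only [mem_range, mem_Icc]; omega]
    exact sum_congr rfl fun q _ => sum_congr rfl fun k _ => by simp only [Z]; ring
  calc pairWeight m A x y
      ≤ ∑ j ∈ range (A + 1), ‖Dker m (Mf m j) x‖₊ *
          (4 * (∑ s ∈ range (j + 1), (Mf m s : ℝ≥0) *
            ∑ i ∈ Icc s j, ∑ v ∈ Icc 1 (m s - 1), ‖Dker m (Mf m i) (y - v • evec m s)‖₊) +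
          3 * ∑ t ∈ Ico (j + 1) (A + 1), ‖rr m (j + 1) (t - 1) x y‖₊ *
            ∑ q ∈ range (j + 1), Z j q) := by
        refine sum_le_sum fun j hj => ?_
        simp_rw [mul_assoc, ← mul_sum]
        exact nnnorm_Dker_Mf_mul_le_mul hm fun hx =>
          sum_nnnorm_Dker_mul_sum_prod_pair_le hm (Nat.lt_succ_iff.mp (mem_range.mp hj)) x y hx
    _ = 4 * diagBound m A x y + 3 * rrBound m A x y := by
        rw [← hreindex, diagBound, mul_sum, mul_sum, ← sum_add_distrib]
        exact sum_congr rfl fun j _ => by ring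
    _ ≤ 4 * (rrBound m A x y + diagBound m A x y) := by
        rw [mul_add, add_comm]
        gcongr
        norm_num

end Vilenkin

open Vilenkin in
theorem stmt9 (m : ℕ → ℕ) (hm : ∀ k, 2 ≤ m k) (B : ℕ) (hB : ∀ k, m k ≤ B) :
    ∃ c : ℝ≥0, 0 < c ∧ ∀ (A n : ℕ) (x y : ∀ j, ZMod (m j)),
      Mf m A ≤ n → n < Mf m (A + 1) →
      (n : ℝ≥0) * ‖MKer m n x y‖₊ ≤
        c * ((∑ j ∈ Finset.range (A + 1), ∑ q ∈ Finset.range j, ∑ k ∈ Finset.Icc q (j - 1),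
                ‖rr m (k + 1) (j - 1) x y‖₊ * (Mf m q : ℝ≥0) * ‖Dker m (Mf m k) x‖₊ *
                  ∑ v ∈ Finset.Icc 1 (m q - 1), ‖Dker m (Mf m k) (y - v • evec m q)‖₊) +
             (∑ j ∈ Finset.range (A + 1), ∑ q ∈ Finset.range j, ∑ k ∈ Finset.Icc q (j - 1),
                ‖rr m (k + 1) (j - 1) x y‖₊ * (Mf m q : ℝ≥0) * ‖Dker m (Mf m k) y‖₊ *
                  ∑ v ∈ Finset.Icc 1 (m q - 1), ‖Dker m (Mf m k) (x - v • evec m q)‖₊) +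
             (∑ j ∈ Finset.range (A + 1), ‖Dker m (Mf m j) x‖₊ *
                ∑ s ∈ Finset.range (j + 1), (Mf m s : ℝ≥0) *
                  ∑ i ∈ Finset.Icc s j, ∑ v ∈ Finset.Icc 1 (m s - 1),
                    ‖Dker m (Mf m i) (y - v • evec m s)‖₊) +
             ∑ j ∈ Finset.range (A + 1), ‖Dker m (Mf m j) y‖₊ *
                ∑ s ∈ Finset.range (j + 1), (Mf m s : ℝ≥0) *
                  ∑ i ∈ Finset.Icc s j, ∑ v ∈ Finset.Icc 1 (m s - 1),
                    ‖Dker m (Mf m i) (x - v • evec m s)‖₊) := by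
  have hB₀ : (0 : ℝ≥0) < B := by exact_mod_cast (show 0 < B by linarith [hm 0, hB 0])
  refine ⟨4 * (B : ℝ≥0) ^ 13, by positivity, fun A n x y _ hn => ?_⟩
  rw [natCast_mul_nnnorm_MKer]
  calc _ ≤ B ^ 13 * (pairWeight m A x y + pairWeight m A y x) :=
        nnnorm_sum_Dker_mul_Dker_le hm hB hn x y
    _ ≤ B ^ 13 * (4 * (rrBound m A x y + diagBound m A x y) +
          4 * (rrBound m A y x + diagBound m A y x)) := by
        gcongr <;> exact pairWeight_le hm A _ _
    _ = _ := by
        simp only [rrBound, diagBound, rr_comm m _ _ y x]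
        ring
end
end
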